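/- Let q ∈ ℝ² and let s be a real number with s > ‖q‖, and let E := {p ∈ ℝ² : ‖p‖ + dist(p, q) = s} be the ellipse with foci 0 and q and string length s. Suppose (a, b, c, d, e) ∈ ℝ⁵ are such that every point (x, y) ∈ E satisfies a·x² + b·y² + c·x·y + d·x + e·y + 1 = 0. Then e² − 4b − d² + 4a = 0 and d·e − 2c = 0. -/

import Mathlib

/-!
Along the ray through a unit vector `u`, the ellipse with foci `0` and `q` and string length `s`
is met at distance `r(u) = (s² - ‖q‖²) / (2 (s - ⟪u, q⟫))` from the origin (its polar equation
about the focus). Restricting the conic to the line `ℝ u` gives `A r² + L r + 1` with `A`, `L` the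
quadratic and linear parts at `u`; its vanishing at `r(u)` and at `-r(-u)` determines `L` and `A`:
`D L = 4 ⟪u, q⟫` and `D² A = 4 ⟪u, q⟫² - 4 s²`, where `D = s² - ‖q‖² ≠ 0`. So the conic is,
up to the factor `-D²`, the focal conic `4 s² ‖p‖² - (D + 2 ⟪p, q⟫)²`, whose coefficients satisfy
both relations. Three directions `(1, 0)`, `(0, 1)`, `(3/5, 4/5)` suffice to read off `a, …, e`.
-/

open RealInnerProductSpace

noncomputable def focalRadius {E : Type*} [NormedAddCommGroup E] [InnerProductSpace ℝ E]
    (q : E) (s : ℝ) (u : E) : ℝ :=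
  (s ^ 2 - ‖q‖ ^ 2) / (2 * (s - ⟪u, q⟫))

section FocalRadius

variable {E : Type*} [NormedAddCommGroup E] [InnerProductSpace ℝ E] {q u : E} {s : ℝ}

lemma inner_le_norm_of_norm_eq_one (hu : ‖u‖ = 1) : ⟪u, q⟫ ≤ ‖q‖ := by
  simpa [hu] using real_inner_le_norm u q

lemma two_mul_sub_inner_mul_focalRadius (hu : ‖u‖ = 1) (hs : ‖q‖ < s) :
    2 * (s - ⟪u, q⟫) * focalRadius q s u = s ^ 2 - ‖q‖ ^ 2 :=
  mul_div_cancel₀ _ (by linarith [inner_le_norm_of_norm_eq_one (q := q) hu])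

lemma focalRadius_nonneg (hu : ‖u‖ = 1) (hs : ‖q‖ < s) : 0 ≤ focalRadius q s u := by
  have := inner_le_norm_of_norm_eq_one (q := q) hu
  unfold focalRadius
  apply div_nonneg <;> nlinarith [norm_nonneg q]

lemma focalRadius_le (hu : ‖u‖ = 1) (hs : ‖q‖ < s) : focalRadius q s u ≤ s := by
  have ht := inner_le_norm_of_norm_eq_one (q := q) hu
  have hr := two_mul_sub_inner_mul_focalRadius hu hs
  have hr₀ := focalRadius_nonneg hu hs
  -- `2 (s - ⟪u, q⟫) (s - r) = s² - 2 s ⟪u, q⟫ + ‖q‖² ≥ (s - ‖q‖)² ≥ 0`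
  nlinarith [sq_nonneg (s - ‖q‖), norm_nonneg q]

theorem norm_add_dist_focalRadius_smul (hu : ‖u‖ = 1) (hs : ‖q‖ < s) :
    ‖focalRadius q s u • u‖ + dist (focalRadius q s u • u) q = s := by
  set r := focalRadius q s u
  have hr₀ : 0 ≤ r := focalRadius_nonneg hu hs
  have hnorm : ‖r • u‖ = r := by rw [norm_smul, hu, mul_one, Real.norm_of_nonneg hr₀]
  have hdist : dist (r • u) q = s - r := by
    rw [dist_eq_norm, ← sq_eq_sq₀ (norm_nonneg _) (sub_nonneg.2 (focalRadius_le hu hs)),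
      norm_sub_sq_real, hnorm, real_inner_smul_left]
    linear_combination two_mul_sub_inner_mul_focalRadius hu hs
  rw [hnorm, hdist, add_sub_cancel]

end FocalRadius

lemma focal_relations_of_antipodal_roots {A L D s t r r' : ℝ} (hs : s ≠ 0)
    (hr : 2 * (s - t) * r = D) (hr' : 2 * (s + t) * r' = D)
    (h : A * r ^ 2 + L * r + 1 = 0) (h' : A * r' ^ 2 - L * r' + 1 = 0) :
    D * L = 4 * t ∧ D ^ 2 * A = 4 * t ^ 2 - 4 * s ^ 2 := by
  have h₁ : D ^ 2 * A + 2 * (s - t) * D * L + 4 * (s - t) ^ 2 = 0 := by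
    linear_combination (2 * (s - t)) ^ 2 * h - (A * (D + 2 * (s - t) * r) + 2 * (s - t) * L) * hr
  have h₂ : D ^ 2 * A - 2 * (s + t) * D * L + 4 * (s + t) ^ 2 = 0 := by
    linear_combination (2 * (s + t)) ^ 2 * h' - (A * (D + 2 * (s + t) * r') - 2 * (s + t) * L) * hr'
  have hL : D * L = 4 * t :=
    sub_eq_zero.1 <| (mul_eq_zero.1 (by linear_combination (h₁ - h₂) / 4 :
      s * (D * L - 4 * t) = 0)).resolve_left hs
  exact ⟨hL, by linear_combination (h₁ + h₂) / 2 + 2 * t * hL⟩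

lemma focal_relations_of_forall_mem_ellipse {q : EuclideanSpace ℝ (Fin 2)} {s a b c d e : ℝ}
    (hs : ‖q‖ < s)
    (hconic : ∀ p : EuclideanSpace ℝ (Fin 2), ‖p‖ + dist p q = s →
      a * (p 0) ^ 2 + b * (p 1) ^ 2 + c * (p 0) * (p 1) + d * (p 0) + e * (p 1) + 1 = 0)
    {x y : ℝ} (hxy : x ^ 2 + y ^ 2 = 1) :
    (s ^ 2 - ‖q‖ ^ 2) * (d * x + e * y) = 4 * (x * q 0 + y * q 1) ∧
      (s ^ 2 - ‖q‖ ^ 2) ^ 2 * (a * x ^ 2 + b * y ^ 2 + c * x * y) =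
        4 * (x * q 0 + y * q 1) ^ 2 - 4 * s ^ 2 := by
  set u : EuclideanSpace ℝ (Fin 2) := !₂[x, y]
  have hu : ‖u‖ = 1 := by simp [u, EuclideanSpace.norm_eq, Fin.sum_univ_two, hxy]
  have hinner : ⟪u, q⟫ = x * q 0 + y * q 1 := by
    simp [u, PiLp.inner_apply, Fin.sum_univ_two]; ring
  have hr := two_mul_sub_inner_mul_focalRadius (q := q) hu hs
  have hr' := two_mul_sub_inner_mul_focalRadius (q := q) (u := -u) (by rw [norm_neg, hu]) hs
  have h := hconic _ (norm_add_dist_focalRadius_smul hu hs)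
  have h' := hconic _ (norm_add_dist_focalRadius_smul (u := -u) (by rw [norm_neg, hu]) hs)
  rw [inner_neg_left, sub_neg_eq_add] at hr'
  rw [hinner] at hr hr'
  simp only [u, PiLp.smul_apply, PiLp.neg_apply, Matrix.cons_val_zero, Matrix.cons_val_one,
    smul_eq_mul] at h h'
  exact focal_relations_of_antipodal_roots (hs := ((norm_nonneg q).trans_lt hs).ne')
    hr hr' (by linear_combination h) (by linear_combination h')

theorem focal_condition_of_origin_focus (q : EuclideanSpace ℝ (Fin 2)) (s : ℝ)
    (hs : s > ‖q‖) (a b c d e : ℝ)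
    (hconic : ∀ p ∈ {p : EuclideanSpace ℝ (Fin 2) | ‖p‖ + dist p q = s},
      a * (p 0) ^ 2 + b * (p 1) ^ 2 + c * (p 0) * (p 1) + d * (p 0) + e * (p 1) + 1 = 0) :
    e ^ 2 - 4 * b - d ^ 2 + 4 * a = 0 ∧ d * e - 2 * c = 0 := by
  obtain ⟨hd, ha⟩ := focal_relations_of_forall_mem_ellipse hs hconic (x := 1) (y := 0) (by norm_num)
  obtain ⟨he, hb⟩ := focal_relations_of_forall_mem_ellipse hs hconic (x := 0) (y := 1) (by norm_num)
  obtain ⟨-, hc⟩ := focal_relations_of_forall_mem_ellipse hs hconic (x := 3 / 5) (y := 4 / 5)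
    (by norm_num)
  set D := s ^ 2 - ‖q‖ ^ 2
  have hD : D ^ 2 ≠ 0 := pow_ne_zero 2 (by nlinarith [norm_nonneg q])
  constructor
  · refine mul_right_cancel₀ hD ?_
    linear_combination (e * D + 4 * q 1) * he - (d * D + 4 * q 0) * hd - 4 * hb + 4 * ha
  · refine mul_right_cancel₀ hD ?_
    linear_combination e * D * hd + 4 * q 0 * he - 25 / 6 * hc + 3 / 2 * ha + 8 / 3 * hb
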